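/- Assume N₂ ≥ N₁ > 0, b > a > 0, η = max_{x∈V} 1/μ(x), and λ > 16πN₂η/(a−b)². Let (u_λ, v_λ) be the maximal solution of the shifted U(1)×U(1) Chern-Simons system. Then for all x ∈ V: −u₀(x) + ln((1+√(1 − 16πN₂η/(λ(a−b)²)))/2) ≤ u_λ(x) < −u₀(x), and the analogous bounds hold for v_λ. Consequently (u_λ, v_λ) → (−u₀, −v₀) uniformly on V as λ → ∞. -/

import Mathlib

/-!
Write `s = u + u₀`, `t = v + v₀`. As `Δu₀ = 4π ∑ mⱼ δ_{pⱼ} - 4πN₁/|V|`, the system becomes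
`Δs = λ f₁(s, t) + α`, `Δt = λ f₁(t, s) + β` with point sources `α, β ≥ 0`, `α ≠ 0`.

Upper bound: `f₁(s, t) > 0` when `s > 0` and `t ≤ s`, so `max(s, t)` has no positive maximum.
Since moreover `f₁(0, t) ≥ 0` for `t ≤ 0`, a zero of `s` or of `t` spreads along the connected
graph, which the source `α` forbids.

Lower bound: for `K = λ(a² + b²)` the map `K s - λ f₁(s, t)` is increasing in `s` and `t` on
`s, t ≤ 0`, so a solution between the subsolution `(log r, log r)` and the supersolution `(0, 0)`
is a fixed point of a monotone map (Knaster–Tarski), and the maximal solution lies above it.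
The subsolution condition reads `α, β ≤ λ(a - b)² r(1 - r)`; as `α, β ≤ 4πN₂η`, one may take
for `r` the larger root of `λ(a - b)² r(1 - r) = 4πN₂η`, which tends to `1` as `λ → ∞`.
-/

open Real Filter

noncomputable def graphLap {V : Type*} [Fintype V] (w : V → V → ℝ) (μ : V → ℝ)
    (u : V → ℝ) (x : V) : ℝ :=
  (μ x)⁻¹ * ∑ y, w x y * (u y - u x)

def graphConnected {V : Type*} (w : V → V → ℝ) : Prop :=
  ∀ x y : V, Relation.ReflTransGen (fun a b => 0 < w a b) x y

noncomputable def dirac {V : Type*} [DecidableEq V] (μ : V → ℝ) (p x : V) : ℝ :=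
  if x = p then (μ x)⁻¹ else 0

noncomputable def f₁ (a b u v : ℝ) : ℝ :=
  a * (b - a) * exp u - b * (b - a) * exp v + a ^ 2 * exp (2 * u)
    - a * b * exp (2 * v) + b * (b - a) * exp (u + v)

noncomputable def f₂ (a b u v : ℝ) : ℝ :=
  -(b * (b - a) * exp u) + a * (b - a) * exp v - a * b * exp (2 * u)
    + a ^ 2 * exp (2 * v) + b * (b - a) * exp (u + v)

section GraphLaplacian

variable {V : Type*} [Fintype V] (w : V → V → ℝ) (μ : V → ℝ)

noncomputable def graphLapLinear : (V → ℝ) →ₗ[ℝ] V → ℝ where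
  toFun := graphLap w μ
  map_add' u v := by
    ext x
    simp only [graphLap, Pi.add_apply, ← mul_add, ← Finset.sum_add_distrib]
    congr 1
    exact Finset.sum_congr rfl fun y _ => by ring
  map_smul' c u := by
    ext x
    simp only [graphLap, Pi.smul_apply, smul_eq_mul, RingHom.id_apply, Finset.mul_sum]
    exact Finset.sum_congr rfl fun y _ => by ring

lemma graphLap_add (u v : V → ℝ) :
    graphLap w μ (u + v) = graphLap w μ u + graphLap w μ v :=
  map_add (graphLapLinear w μ) u v

lemma graphLap_sub (u v : V → ℝ) :
    graphLap w μ (u - v) = graphLap w μ u - graphLap w μ v :=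
  map_sub (graphLapLinear w μ) u v

lemma graphLap_zero : graphLap w μ 0 = 0 :=
  map_zero (graphLapLinear w μ)

lemma graphLap_const (c : ℝ) : graphLap w μ (fun _ => c) = 0 := by
  ext x
  simp [graphLap]

variable {w μ}

lemma graphLap_nonpos_of_isMax (hw : ∀ x y, 0 ≤ w x y) (hμ : ∀ x, 0 < μ x) {g : V → ℝ} {x : V}
    (hx : ∀ y, g y ≤ g x) : graphLap w μ g x ≤ 0 :=
  mul_nonpos_of_nonneg_of_nonpos (inv_pos.2 (hμ x)).le <|
    Finset.sum_nonpos fun y _ => mul_nonpos_of_nonneg_of_nonpos (hw x y) (by linarith [hx y])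

lemma graphLap_nonneg_of_isMin (hw : ∀ x y, 0 ≤ w x y) (hμ : ∀ x, 0 < μ x) {g : V → ℝ} {x : V}
    (hx : ∀ y, g x ≤ g y) : 0 ≤ graphLap w μ g x :=
  mul_nonneg (inv_pos.2 (hμ x)).le <|
    Finset.sum_nonneg fun y _ => mul_nonneg (hw x y) (by linarith [hx y])

lemma le_of_smul_sub_graphLap_le (hw : ∀ x y, 0 ≤ w x y) (hμ : ∀ x, 0 < μ x) {K : ℝ}
    (hK : 0 < K) {g h : V → ℝ} (hgh : K • g - graphLap w μ g ≤ K • h - graphLap w μ h) :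
    g ≤ h := by
  intro x
  have : Nonempty V := ⟨x⟩
  obtain ⟨x₀, hx₀⟩ := Finite.exists_min (h - g)
  have hΔ := graphLap_nonneg_of_isMin hw hμ hx₀
  have hgh₀ := hgh x₀
  rw [graphLap_sub] at hΔ
  simp only [Pi.sub_apply, Pi.smul_apply, smul_eq_mul] at hΔ hgh₀ hx₀
  have : 0 ≤ h x₀ - g x₀ := by nlinarith
  linarith [hx₀ x]

lemma smul_sub_graphLap_surjective (hw : ∀ x y, 0 ≤ w x y) (hμ : ∀ x, 0 < μ x) {K : ℝ}
    (hK : 0 < K) : Function.Surjective fun g : V → ℝ => K • g - graphLap w μ g := by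
  let L : (V → ℝ) →ₗ[ℝ] V → ℝ := K • LinearMap.id - graphLapLinear w μ
  have hL : ∀ g, L g = K • g - graphLap w μ g := fun _ => rfl
  have hinj : Function.Injective L := by
    intro g h hgh
    rw [hL, hL] at hgh
    exact le_antisymm (le_of_smul_sub_graphLap_le hw hμ hK hgh.le)
      (le_of_smul_sub_graphLap_le hw hμ hK hgh.ge)
  simpa only [← hL] using LinearMap.injective_iff_surjective.1 hinj

lemma graphConnected.eq_zero_of_nonpos (hconn : graphConnected w) (hw : ∀ x y, 0 ≤ w x y)
    (hμ : ∀ x, 0 < μ x) {g : V → ℝ} (hg : ∀ x, g x ≤ 0)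
    (hΔ : ∀ x, g x = 0 → 0 ≤ graphLap w μ g x) {z : V} (hz : g z = 0) (y : V) : g y = 0 := by
  have hstep : ∀ x y, g x = 0 → 0 < w x y → g y = 0 := by
    intro x y hx hxy
    have hterm : ∀ y' ∈ Finset.univ, w x y' * (g y' - g x) ≤ 0 := fun y' _ =>
      mul_nonpos_of_nonneg_of_nonpos (hw x y') (by linarith [hg y'])
    have hsum : ∑ y', w x y' * (g y' - g x) = 0 :=
      le_antisymm (Finset.sum_nonpos hterm)
        ((mul_nonneg_iff_of_pos_left (inv_pos.2 (hμ x))).1 (hΔ x hx))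
    rcases mul_eq_zero.1 ((Finset.sum_eq_zero_iff_of_nonpos hterm).1 hsum y (Finset.mem_univ y))
      with h | h
    · exact absurd h hxy.ne'
    · linarith
  induction hconn z y with
  | refl => exact hz
  | tail _ hbc ih => exact hstep _ _ ih hbc

end GraphLaplacian

section Nonlinearity

variable {a b : ℝ}

lemma f₂_eq_f₁_swap (a b u v : ℝ) : f₂ a b u v = f₁ a b v u := by
  unfold f₁ f₂
  rw [add_comm u v]
  ring

lemma f₁_eq (a b u v : ℝ) :
    f₁ a b u v = (exp u - exp v) * (a * (b - a) + a ^ 2 * exp u + a * b * exp v)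
      + (b - a) ^ 2 * exp v * (exp u - 1) := by
  simp only [f₁, two_mul, exp_add]
  ring

lemma f₁_zero_left (a b v : ℝ) : f₁ a b 0 v = a * b * (1 - exp v) * (1 + exp v) := by
  rw [f₁_eq, exp_zero]
  ring

lemma f₁_log_log (a b : ℝ) {r : ℝ} (hr : 0 < r) :
    f₁ a b (log r) (log r) = -((a - b) ^ 2 * (r * (1 - r))) := by
  rw [f₁_eq, exp_log hr]
  ring

lemma f₁_pos (ha : 0 < a) (hab : a < b) {u v : ℝ} (hu : 0 < u) (hvu : v ≤ u) :
    0 < f₁ a b u v := by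
  rw [f₁_eq]
  have hexp : exp v ≤ exp u := exp_le_exp.2 hvu
  have hba : 0 < b - a := sub_pos.2 hab
  have h₁ : 0 ≤ (exp u - exp v) * (a * (b - a) + a ^ 2 * exp u + a * b * exp v) :=
    mul_nonneg (sub_nonneg.2 hexp)
      (add_nonneg (add_nonneg (mul_pos ha hba).le (by positivity))
        (by have := ha.trans hab; positivity))
  have h₂ : 0 < (b - a) ^ 2 * exp v * (exp u - 1) := by
    have := one_lt_exp_iff.2 hu
    have := exp_pos v
    have := pow_pos hba 2
    positivity
  linarith

lemma f₁_zero_left_nonneg (ha : 0 < a) (hab : a < b) {v : ℝ} (hv : v ≤ 0) : 0 ≤ f₁ a b 0 v := by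
  rw [f₁_zero_left]
  exact mul_nonneg (mul_nonneg (mul_pos ha (ha.trans hab)).le (sub_nonneg.2 (exp_le_one_iff.2 hv)))
    (by positivity)

lemma f₁_zero_left_pos (ha : 0 < a) (hab : a < b) {v : ℝ} (hv : v < 0) : 0 < f₁ a b 0 v := by
  rw [f₁_zero_left]
  exact mul_pos (mul_pos (mul_pos ha (ha.trans hab)) (sub_pos.2 (exp_lt_one_iff.2 hv)))
    (by positivity)

lemma exp_sub_exp_le_of_nonpos {s s' : ℝ} (hs : s ≤ 0) (hs' : s' ≤ s) :
    exp s - exp s' ≤ s - s' := by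
  have h : exp s * (s' - s + 1) ≤ exp s' := by
    calc exp s * (s' - s + 1) ≤ exp s * exp (s' - s) :=
          mul_le_mul_of_nonneg_left (add_one_le_exp _) (exp_pos s).le
      _ = exp s' := by rw [← exp_add, add_sub_cancel]
  nlinarith [exp_le_one_iff.2 hs]

lemma f₁_sub_f₁_le (ha : 0 < a) (hab : a < b) {s s' t t' : ℝ} (hs : s ≤ 0) (hs' : s' ≤ s)
    (ht : t ≤ 0) (ht' : t' ≤ t) :
    f₁ a b s t - f₁ a b s' t' ≤ (a ^ 2 + b ^ 2) * (s - s') := by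
  have hba : 0 < b - a := sub_pos.2 hab
  have hb : 0 < b := ha.trans hab
  have hexp_s : exp s' ≤ exp s := exp_le_exp.2 hs'
  have hexp_t : exp t' ≤ exp t := exp_le_exp.2 ht'
  have hs1 : exp s ≤ 1 := exp_le_one_iff.2 hs
  have ht1 : exp t' ≤ 1 := exp_le_one_iff.2 (ht'.trans ht)
  have hright : f₁ a b s t ≤ f₁ a b s t' := by
    have key : f₁ a b s t' - f₁ a b s t
        = (exp t - exp t') * (a * b * (exp t' + exp t) + b * (b - a) * (1 - exp s)) := by
      simp only [f₁, two_mul, exp_add]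
      ring
    have : 0 ≤ (exp t - exp t') * (a * b * (exp t' + exp t) + b * (b - a) * (1 - exp s)) := by
      have := exp_pos t
      have := exp_pos t'
      have := mul_pos hb hba
      have := mul_pos ha hb
      exact mul_nonneg (sub_nonneg.2 hexp_t) (by positivity)
    linarith
  have hleft : f₁ a b s t' - f₁ a b s' t' ≤ (a ^ 2 + b ^ 2) * (s - s') := by
    set B := a * (b - a) + a ^ 2 * (exp s + exp s') + b * (b - a) * exp t'
    have key : f₁ a b s t' - f₁ a b s' t' = (exp s - exp s') * B := by
      simp only [B, f₁, two_mul, exp_add]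
      ring
    have hB0 : 0 ≤ B := by
      have := exp_pos s'
      have := exp_pos t'
      have := mul_pos ha hba
      have := mul_pos hb hba
      positivity
    have hB : B ≤ a ^ 2 + b ^ 2 := by
      have h₁ : a ^ 2 * (exp s + exp s') ≤ a ^ 2 * 2 :=
        mul_le_mul_of_nonneg_left (by linarith) (sq_nonneg a)
      have h₂ : b * (b - a) * exp t' ≤ b * (b - a) :=
        mul_le_of_le_one_right (mul_pos hb hba).le ht1
      nlinarith
    rw [key]
    calc (exp s - exp s') * B ≤ (s - s') * B :=
          mul_le_mul_of_nonneg_right (exp_sub_exp_le_of_nonpos hs hs') hB0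
      _ ≤ (s - s') * (a ^ 2 + b ^ 2) := mul_le_mul_of_nonneg_left hB (by linarith)
      _ = (a ^ 2 + b ^ 2) * (s - s') := mul_comm _ _
  linarith

end Nonlinearity

section UpperBound

variable {V : Type*} [Fintype V] {w : V → V → ℝ} {μ : V → ℝ} {a b lam : ℝ}

lemma nonpos_of_isMax_of_f₁_le (hw : ∀ x y, 0 ≤ w x y) (hμ : ∀ x, 0 < μ x) (ha : 0 < a)
    (hab : a < b) (hlam : 0 < lam) {s t : V → ℝ} {x : V}
    (hs : lam * f₁ a b (s x) (t x) ≤ graphLap w μ s x) (hmax : ∀ y, s y ≤ s x)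
    (hts : t x ≤ s x) : s x ≤ 0 := by
  by_contra! hpos
  have := graphLap_nonpos_of_isMax hw hμ hmax
  have := mul_pos hlam (f₁_pos ha hab hpos hts)
  linarith

lemma nonpos_of_f₁_le_graphLap (hw : ∀ x y, 0 ≤ w x y) (hμ : ∀ x, 0 < μ x) (ha : 0 < a)
    (hab : a < b) (hlam : 0 < lam) {s t : V → ℝ}
    (hs : ∀ x, lam * f₁ a b (s x) (t x) ≤ graphLap w μ s x)
    (ht : ∀ x, lam * f₁ a b (t x) (s x) ≤ graphLap w μ t x) (x : V) : s x ≤ 0 ∧ t x ≤ 0 := by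
  have : Nonempty V := ⟨x⟩
  obtain ⟨x₀, hx₀⟩ := Finite.exists_max fun y => max (s y) (t y)
  have hle : ∀ y, s y ≤ max (s x₀) (t x₀) ∧ t y ≤ max (s x₀) (t x₀) := fun y => max_le_iff.1 (hx₀ y)
  have hmax : max (s x₀) (t x₀) ≤ 0 := by
    rcases le_total (t x₀) (s x₀) with h | h
    · rw [max_eq_left h] at hle ⊢
      exact nonpos_of_isMax_of_f₁_le hw hμ ha hab hlam (hs x₀) (fun y => (hle y).1) h
    · rw [max_eq_right h] at hle ⊢
      exact nonpos_of_isMax_of_f₁_le hw hμ ha hab hlam (ht x₀) (fun y => (hle y).2) h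
  exact max_le_iff.1 ((hx₀ x).trans hmax)

theorem neg_of_f₁_le_graphLap (hconn : graphConnected w) (hw : ∀ x y, 0 ≤ w x y)
    (hμ : ∀ x, 0 < μ x) (ha : 0 < a) (hab : a < b) (hlam : 0 < lam) {s t : V → ℝ}
    (hs : ∀ x, lam * f₁ a b (s x) (t x) ≤ graphLap w μ s x)
    (ht : ∀ x, lam * f₁ a b (t x) (s x) ≤ graphLap w μ t x)
    (hstrict : ∃ x, lam * f₁ a b (s x) (t x) < graphLap w μ s x) (x : V) :
    s x < 0 ∧ t x < 0 := by
  have hnp := nonpos_of_f₁_le_graphLap hw hμ ha hab hlam hs ht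
  have hzero : ∀ g h : V → ℝ, (∀ x, g x ≤ 0) → (∀ x, h x ≤ 0) →
      (∀ x, lam * f₁ a b (g x) (h x) ≤ graphLap w μ g x) → ∀ z, g z = 0 → g = 0 :=
    fun g h hg hh hgh z hz => funext <| hconn.eq_zero_of_nonpos hw hμ hg
      (fun y hy => (mul_nonneg hlam.le (f₁_zero_left_nonneg ha hab (hh y))).trans (hy ▸ hgh y)) hz
  have hs_ne : ∀ z, s z ≠ 0 := by
    intro z hz
    obtain ⟨x₁, hx₁⟩ := hstrict
    rw [hzero s t (fun y => (hnp y).1) (fun y => (hnp y).2) hs z hz] at hx₁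
    simp only [Pi.zero_apply, graphLap_zero] at hx₁
    have := mul_nonneg hlam.le (f₁_zero_left_nonneg ha hab (hnp x₁).2)
    linarith
  have ht_ne : ∀ z, t z ≠ 0 := by
    intro z hz
    have hz' := ht z
    rw [hzero t s (fun y => (hnp y).2) (fun y => (hnp y).1) ht z hz] at hz'
    simp only [Pi.zero_apply, graphLap_zero] at hz'
    have := mul_pos hlam (f₁_zero_left_pos ha hab (lt_of_le_of_ne (hnp z).1 (hs_ne z)))
    linarith
  exact ⟨lt_of_le_of_ne (hnp x).1 (hs_ne x), lt_of_le_of_ne (hnp x).2 (ht_ne x)⟩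

end UpperBound

-- Stated on a product because `α × β` carries no `ConditionallyCompleteLattice` instance.
theorem exists_fixedPt_prod_of_monotoneOn {α β : Type*} [ConditionallyCompleteLattice α]
    [ConditionallyCompleteLattice β] {T : α × β → α × β} {lo hi : α × β} (hle : lo ≤ hi)
    (hT : MonotoneOn T (Set.Icc lo hi)) (hlo : lo ≤ T lo) (hhi : T hi ≤ hi) :
    ∃ p ∈ Set.Icc lo hi, T p = p := by
  have : Fact (lo.1 ≤ hi.1) := ⟨hle.1⟩
  have : Fact (lo.2 ≤ hi.2) := ⟨hle.2⟩
  let e : Set.Icc lo.1 hi.1 × Set.Icc lo.2 hi.2 → α × β := fun q => (q.1, q.2)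
  have he : ∀ q, e q ∈ Set.Icc lo hi := fun q => ⟨⟨q.1.2.1, q.2.2.1⟩, ⟨q.1.2.2, q.2.2.2⟩⟩
  have hmaps : ∀ q, T (e q) ∈ Set.Icc lo hi := fun q =>
    ⟨hlo.trans (hT ⟨le_rfl, hle⟩ (he q) (he q).1), (hT (he q) ⟨hle, le_rfl⟩ (he q).2).trans hhi⟩
  let T' : (Set.Icc lo.1 hi.1 × Set.Icc lo.2 hi.2) →o Set.Icc lo.1 hi.1 × Set.Icc lo.2 hi.2 :=
    { toFun := fun q => (⟨(T (e q)).1, (hmaps q).1.1, (hmaps q).2.1⟩,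
        ⟨(T (e q)).2, (hmaps q).1.2, (hmaps q).2.2⟩)
      monotone' := fun q q' h => hT (he q) (he q') h }
  refine ⟨e (OrderHom.lfp T'), he _, ?_⟩
  have hfix := OrderHom.map_lfp T'
  exact Prod.ext (congrArg (fun q => (q.1 : α)) hfix) (congrArg (fun q => (q.2 : β)) hfix)

section Existence

variable {V : Type*} [Fintype V] {w : V → V → ℝ} {μ : V → ℝ}

theorem exists_solution_of_sub_super (hw : ∀ x y, 0 ≤ w x y) (hμ : ∀ x, 0 < μ x) {K : ℝ}
    (hK : 0 < K) {F G : V → ℝ → ℝ → ℝ} {lo hi : (V → ℝ) × (V → ℝ)} (hle : lo ≤ hi)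
    (hF : ∀ x s s' t t', s' ≤ s → s ≤ hi.1 x → t' ≤ t → t ≤ hi.2 x →
      K * s' - F x s' t' ≤ K * s - F x s t)
    (hG : ∀ x s s' t t', s' ≤ s → s ≤ hi.1 x → t' ≤ t → t ≤ hi.2 x →
      K * t' - G x s' t' ≤ K * t - G x s t)
    (hlo : ∀ x, F x (lo.1 x) (lo.2 x) ≤ graphLap w μ lo.1 x ∧
      G x (lo.1 x) (lo.2 x) ≤ graphLap w μ lo.2 x)
    (hhi : ∀ x, graphLap w μ hi.1 x ≤ F x (hi.1 x) (hi.2 x) ∧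
      graphLap w μ hi.2 x ≤ G x (hi.1 x) (hi.2 x)) :
    ∃ p ∈ Set.Icc lo hi, ∀ x, graphLap w μ p.1 x = F x (p.1 x) (p.2 x) ∧
      graphLap w μ p.2 x = G x (p.1 x) (p.2 x) := by
  choose R hR' using smul_sub_graphLap_surjective hw hμ hK
  have hR : ∀ h, K • R h - graphLap w μ (R h) = h := hR'
  have hcmp : ∀ {g g'}, K • g - graphLap w μ g ≤ K • g' - graphLap w μ g' → g ≤ g' :=
    le_of_smul_sub_graphLap_le hw hμ hK
  have hle_R : ∀ g h, (∀ x, K * g x - graphLap w μ g x ≤ h x) → g ≤ R h := fun g h hgh =>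
    hcmp <| by rw [hR]; exact hgh
  have hR_le : ∀ g h, (∀ x, h x ≤ K * g x - graphLap w μ g x) → R h ≤ g := fun g h hgh =>
    hcmp <| by rw [hR]; exact hgh
  have hRsolve : ∀ h x, graphLap w μ (R h) x = K * R h x - h x := fun h x => by
    have := congrFun (hR h) x
    simp only [Pi.sub_apply, Pi.smul_apply, smul_eq_mul] at this
    linarith
  have hRmono : Monotone R := fun h h' hh => hcmp (by rw [hR, hR]; exact hh)
  let T : (V → ℝ) × (V → ℝ) → (V → ℝ) × (V → ℝ) := fun p =>
    (R fun x => K * p.1 x - F x (p.1 x) (p.2 x), R fun x => K * p.2 x - G x (p.1 x) (p.2 x))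
  have hTmono : MonotoneOn T (Set.Icc lo hi) := fun p _ p' hp' hpp' =>
    ⟨hRmono fun x => hF x _ _ _ _ (hpp'.1 x) (hp'.2.1 x) (hpp'.2 x) (hp'.2.2 x),
      hRmono fun x => hG x _ _ _ _ (hpp'.1 x) (hp'.2.1 x) (hpp'.2 x) (hp'.2.2 x)⟩
  have hTlo : lo ≤ T lo := ⟨hle_R _ _ fun x => by linarith [(hlo x).1],
    hle_R _ _ fun x => by linarith [(hlo x).2]⟩
  have hThi : T hi ≤ hi := ⟨hR_le _ _ fun x => by linarith [(hhi x).1],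
    hR_le _ _ fun x => by linarith [(hhi x).2]⟩
  obtain ⟨p, hp, hfix⟩ := exists_fixedPt_prod_of_monotoneOn hle hTmono hTlo hThi
  have h₁ : R (fun x => K * p.1 x - F x (p.1 x) (p.2 x)) = p.1 := congrArg Prod.fst hfix
  have h₂ : R (fun x => K * p.2 x - G x (p.1 x) (p.2 x)) = p.2 := congrArg Prod.snd hfix
  refine ⟨p, hp, fun x => ⟨?_, ?_⟩⟩
  · have := hRsolve (fun x => K * p.1 x - F x (p.1 x) (p.2 x)) x
    rw [h₁] at this
    linarith
  · have := hRsolve (fun x => K * p.2 x - G x (p.1 x) (p.2 x)) x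
    rw [h₂] at this
    linarith

theorem exists_solution_log_le {a b lam : ℝ} (hw : ∀ x y, 0 ≤ w x y) (hμ : ∀ x, 0 < μ x)
    (ha : 0 < a) (hab : a < b) (hlam : 0 < lam) {α β : V → ℝ} (hα : ∀ x, 0 ≤ α x)
    (hβ : ∀ x, 0 ≤ β x) {r : ℝ} (hr0 : 0 < r) (hr1 : r ≤ 1)
    (hαr : ∀ x, α x ≤ lam * ((a - b) ^ 2 * (r * (1 - r))))
    (hβr : ∀ x, β x ≤ lam * ((a - b) ^ 2 * (r * (1 - r)))) :
    ∃ s t : V → ℝ, (∀ x, graphLap w μ s x = lam * f₁ a b (s x) (t x) + α x ∧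
      graphLap w μ t x = lam * f₁ a b (t x) (s x) + β x) ∧ ∀ x, log r ≤ s x ∧ log r ≤ t x := by
  have hmono : ∀ (γ : V → ℝ) x s s' t t', s' ≤ s → s ≤ 0 → t' ≤ t → t ≤ 0 →
      lam * (a ^ 2 + b ^ 2) * s' - (lam * f₁ a b s' t' + γ x)
        ≤ lam * (a ^ 2 + b ^ 2) * s - (lam * f₁ a b s t + γ x) := by
    intro γ x s s' t t' hs hs0 ht ht0
    nlinarith [mul_le_mul_of_nonneg_left (f₁_sub_f₁_le ha hab hs0 hs ht0 ht) hlam.le]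
  obtain ⟨⟨s, t⟩, ⟨hlo, -⟩, hst⟩ := exists_solution_of_sub_super (K := lam * (a ^ 2 + b ^ 2))
    (F := fun x s t => lam * f₁ a b s t + α x) (G := fun x s t => lam * f₁ a b t s + β x)
    (lo := (fun _ => log r, fun _ => log r)) (hi := (0, 0)) hw hμ
    (by have := ha.trans hab; positivity)
    ⟨fun _ => log_nonpos hr0.le hr1, fun _ => log_nonpos hr0.le hr1⟩
    (hmono α)
    (fun x s s' t t' hs hs0 ht ht0 => hmono β x t t' s s' ht ht0 hs hs0)
    (fun x => by
      simp only [graphLap_const, Pi.zero_apply, f₁_log_log a b hr0]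
      constructor <;> linarith [hαr x, hβr x])
    (fun x => by
      simp only [graphLap_zero, Pi.zero_apply, f₁_zero_left, exp_zero]
      constructor <;> linarith [hα x, hβ x])
  exact ⟨s, t, hst, fun x => ⟨hlo.1 x, hlo.2 x⟩⟩

end Existence

section MaximalSolution

variable {V : Type*} [Fintype V] {w : V → V → ℝ} {μ : V → ℝ} {a b lam : ℝ}

def IsCSSolution (w : V → V → ℝ) (μ : V → ℝ) (a b lam c₁ c₂ : ℝ) (u₀ v₀ u v : V → ℝ) : Prop :=
  (∀ x, graphLap w μ u x = lam * f₁ a b (u x + u₀ x) (v x + v₀ x) + c₁) ∧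
    ∀ x, graphLap w μ v x = lam * f₂ a b (u x + u₀ x) (v x + v₀ x) + c₂

lemma isCSSolution_iff {u₀ v₀ α β : V → ℝ} {c₁ c₂ : ℝ}
    (hu₀ : ∀ x, graphLap w μ u₀ x = α x - c₁) (hv₀ : ∀ x, graphLap w μ v₀ x = β x - c₂)
    {u v : V → ℝ} :
    IsCSSolution w μ a b lam c₁ c₂ u₀ v₀ u v ↔ ∀ x,
      graphLap w μ (u + u₀) x = lam * f₁ a b ((u + u₀) x) ((v + v₀) x) + α x ∧
      graphLap w μ (v + v₀) x = lam * f₁ a b ((v + v₀) x) ((u + u₀) x) + β x := by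
  simp only [IsCSSolution, graphLap_add, Pi.add_apply, hu₀, hv₀, f₂_eq_f₁_swap, ← forall_and]
  refine forall_congr' fun x => and_congr ?_ ?_ <;> constructor <;> intro h <;> linarith

theorem isCSSolution_bounds_of_maximal (hconn : graphConnected w) (hw : ∀ x y, 0 ≤ w x y)
    (hμ : ∀ x, 0 < μ x) (ha : 0 < a) (hab : a < b) (hlam : 0 < lam) {u₀ v₀ α β : V → ℝ}
    {c₁ c₂ r : ℝ} (hu₀ : ∀ x, graphLap w μ u₀ x = α x - c₁)
    (hv₀ : ∀ x, graphLap w μ v₀ x = β x - c₂) (hα : ∀ x, 0 ≤ α x) (hβ : ∀ x, 0 ≤ β x)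
    (hα₀ : ∃ x, 0 < α x) (hr0 : 0 < r) (hr1 : r ≤ 1)
    (hαr : ∀ x, α x ≤ lam * ((a - b) ^ 2 * (r * (1 - r))))
    (hβr : ∀ x, β x ≤ lam * ((a - b) ^ 2 * (r * (1 - r)))) {U W : V → ℝ}
    (hUW : IsCSSolution w μ a b lam c₁ c₂ u₀ v₀ U W)
    (hmax : ∀ u v, IsCSSolution w μ a b lam c₁ c₂ u₀ v₀ u v → (∀ x, u x ≤ U x) ∧ ∀ x, v x ≤ W x)
    (x : V) : (-u₀ x + log r ≤ U x ∧ U x < -u₀ x) ∧ (-v₀ x + log r ≤ W x ∧ W x < -v₀ x) := by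
  have hUW' := (isCSSolution_iff hu₀ hv₀).1 hUW
  have hneg := neg_of_f₁_le_graphLap hconn hw hμ ha hab hlam
    (fun y => by rw [(hUW' y).1]; linarith [hα y]) (fun y => by rw [(hUW' y).2]; linarith [hβ y])
    (hα₀.imp fun y hy => by rw [(hUW' y).1]; linarith) x
  obtain ⟨s, t, hst, hlog⟩ := exists_solution_log_le hw hμ ha hab hlam hα hβ hr0 hr1 hαr hβr
  have hsol : IsCSSolution w μ a b lam c₁ c₂ u₀ v₀ (s - u₀) (t - v₀) :=
    (isCSSolution_iff hu₀ hv₀).2 (by simpa only [sub_add_cancel] using hst)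
  have hU := (hmax _ _ hsol).1 x
  have hW := (hmax _ _ hsol).2 x
  simp only [Pi.add_apply] at hneg
  simp only [Pi.sub_apply] at hU hW
  exact ⟨⟨by linarith [hlog x], by linarith⟩, by linarith [hlog x], by linarith⟩

end MaximalSolution

section PointSources

variable {V ι : Type*} [DecidableEq V] [Fintype ι] {μ : V → ℝ}

lemma dirac_nonneg (hμ : ∀ x, 0 < μ x) (p x : V) : 0 ≤ dirac μ p x := by
  unfold dirac
  split_ifs
  exacts [(inv_pos.2 (hμ x)).le, le_rfl]

lemma dirac_le {η : ℝ} (hμη : ∀ x, (μ x)⁻¹ ≤ η) (hη : 0 ≤ η) (p x : V) : dirac μ p x ≤ η := by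
  unfold dirac
  split_ifs
  exacts [hμη x, hη]

lemma sum_mul_dirac_nonneg (hμ : ∀ x, 0 < μ x) {m : ι → ℝ} (hm : ∀ j, 0 ≤ m j) (p : ι → V)
    (x : V) : 0 ≤ ∑ j, m j * dirac μ (p j) x :=
  Finset.sum_nonneg fun j _ => mul_nonneg (hm j) (dirac_nonneg hμ _ _)

lemma sum_mul_dirac_le {η : ℝ} (hμη : ∀ x, (μ x)⁻¹ ≤ η) (hη : 0 ≤ η) {m : ι → ℝ}
    (hm : ∀ j, 0 ≤ m j) {M : ℝ} (hM : ∑ j, m j ≤ M) (p : ι → V) (x : V) :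
    ∑ j, m j * dirac μ (p j) x ≤ M * η :=
  calc ∑ j, m j * dirac μ (p j) x ≤ ∑ j, m j * η :=
        Finset.sum_le_sum fun j _ => mul_le_mul_of_nonneg_left (dirac_le hμη hη _ _) (hm j)
    _ ≤ M * η := by rw [← Finset.sum_mul]; exact mul_le_mul_of_nonneg_right hM hη

lemma sum_mul_dirac_pos (hμ : ∀ x, 0 < μ x) {m : ι → ℝ} (hm : ∀ j, 0 < m j) (p : ι → V)
    (j₀ : ι) : 0 < ∑ j, m j * dirac μ (p j) (p j₀) :=
  Finset.sum_pos' (fun j _ => mul_nonneg (hm j).le (dirac_nonneg hμ _ _))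
    ⟨j₀, Finset.mem_univ _, mul_pos (hm j₀) (by rw [dirac, if_pos rfl]; exact inv_pos.2 (hμ _))⟩

end PointSources

section LowerRoot

lemma half_one_add_sqrt_spec {c d lam : ℝ} (hc : 0 ≤ c) (hd : 0 < d) (hlam : c / d < lam) :
    0 < (1 + √(1 - c / (lam * d))) / 2 ∧ (1 + √(1 - c / (lam * d))) / 2 ≤ 1 ∧
      lam * (d * ((1 + √(1 - c / (lam * d))) / 2 * (1 - (1 + √(1 - c / (lam * d))) / 2)))
        = c / 4 := by
  have hlam₀ : 0 < lam := (div_nonneg hc hd.le).trans_lt hlam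
  have hD : c / (lam * d) ≤ 1 :=
    (div_le_one (by positivity)).2 (by linarith [(div_lt_iff₀ hd).1 hlam])
  have hsq := sq_sqrt (sub_nonneg.2 hD)
  have hsq₁ : √(1 - c / (lam * d)) ≤ 1 :=
    sqrt_le_one.2 (by linarith [div_nonneg hc (by positivity : 0 ≤ lam * d)])
  refine ⟨by positivity, by linarith, ?_⟩
  have hprod : (1 + √(1 - c / (lam * d))) / 2 * (1 - (1 + √(1 - c / (lam * d))) / 2)
      = c / (lam * d) / 4 := by
    linear_combination (-1 / 4 : ℝ) * hsq
  rw [hprod]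
  field_simp

lemma tendsto_of_log_half_one_add_sqrt_le {f : ℝ → ℝ} {L c d : ℝ}
    (hf : ∀ lam > c / d, L + log ((1 + √(1 - c / (lam * d))) / 2) ≤ f lam ∧ f lam < L) :
    Tendsto f atTop (nhds L) := by
  have hD : Tendsto (fun lam => c / (lam * d)) atTop (nhds 0) := by
    simpa only [div_mul_eq_div_div_swap, id] using
      (tendsto_const_nhds (x := c / d)).div_atTop tendsto_id
  have hlower : Tendsto (fun lam => L + log ((1 + √(1 - c / (lam * d))) / 2)) atTop (nhds L) := by
    simpa using ((((hD.const_sub 1).sqrt.const_add 1).div_const 2).log (by norm_num)).const_add L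
  refine tendsto_of_tendsto_of_tendsto_of_le_of_le' hlower tendsto_const_nhds ?_ ?_ <;>
    filter_upwards [eventually_gt_atTop (c / d)] with lam hlam
  exacts [(hf lam hlam).1, (hf lam hlam).2.le]

end LowerRoot

theorem stmt_16_general {V : Type*} [Fintype V] [DecidableEq V]
    (w : V → V → ℝ) (μ : V → ℝ)
    (hwnn : ∀ x y, 0 ≤ w x y)
    (hμ : ∀ x, 0 < μ x) (hconn : graphConnected w)
    (a b : ℝ) (ha : 0 < a) (hab : a < b)
    (k₁ k₂ : ℕ) (hk₁ : 0 < k₁)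
    (p : Fin k₁ → V) (q : Fin k₂ → V)
    (m : Fin k₁ → ℝ) (n : Fin k₂ → ℝ)
    (hm : ∀ j, 0 < m j) (hn : ∀ j, 0 < n j)
    (hN : (∑ j, m j) ≤ ∑ j, n j)
    (u₀ v₀ : V → ℝ)
    (hu₀ : ∀ x, graphLap w μ u₀ x =
      -(4 * π * (∑ j, m j)) / (∑ y, μ y) + 4 * π * ∑ j, m j * dirac μ (p j) x)
    (hv₀ : ∀ x, graphLap w μ v₀ x =
      -(4 * π * (∑ j, n j)) / (∑ y, μ y) + 4 * π * ∑ j, n j * dirac μ (q j) x)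
    (η : ℝ) (hη : η = ⨆ x, (μ x)⁻¹)
    (U W : ℝ → V → ℝ)
    (hsol : ∀ lam > 16 * π * (∑ j, n j) * η / (a - b) ^ 2,
      (∀ x, graphLap w μ (U lam) x =
        lam * f₁ a b (U lam x + u₀ x) (W lam x + v₀ x)
          + 4 * π * (∑ j, m j) / (∑ y, μ y)) ∧
      (∀ x, graphLap w μ (W lam) x =
        lam * f₂ a b (U lam x + u₀ x) (W lam x + v₀ x)
          + 4 * π * (∑ j, n j) / (∑ y, μ y)) ∧
      ∀ u' v' : V → ℝ,
        (∀ x, graphLap w μ u' x =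
          lam * f₁ a b (u' x + u₀ x) (v' x + v₀ x)
            + 4 * π * (∑ j, m j) / (∑ y, μ y)) →
        (∀ x, graphLap w μ v' x =
          lam * f₂ a b (u' x + u₀ x) (v' x + v₀ x)
            + 4 * π * (∑ j, n j) / (∑ y, μ y)) →
        (∀ x, u' x ≤ U lam x) ∧ (∀ x, v' x ≤ W lam x)) :
    (∀ lam > 16 * π * (∑ j, n j) * η / (a - b) ^ 2, ∀ x,
      (-u₀ x + Real.log ((1 + Real.sqrt (1 - 16 * π * (∑ j, n j) * η / (lam * (a - b) ^ 2))) / 2)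
        ≤ U lam x ∧ U lam x < -u₀ x) ∧
      (-v₀ x + Real.log ((1 + Real.sqrt (1 - 16 * π * (∑ j, n j) * η / (lam * (a - b) ^ 2))) / 2)
        ≤ W lam x ∧ W lam x < -v₀ x)) ∧
    (∀ x, Tendsto (fun lam => U lam x) atTop (nhds (-u₀ x))) ∧
    (∀ x, Tendsto (fun lam => W lam x) atTop (nhds (-v₀ x))) := by
  have hμη : ∀ x, (μ x)⁻¹ ≤ η := fun x =>
    hη ▸ le_ciSup (f := fun x => (μ x)⁻¹) (Set.finite_range _).bddAbove x
  have hη : 0 ≤ η := (inv_pos.2 (hμ (p ⟨0, hk₁⟩))).le.trans (hμη _)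
  have hN₀ : 0 ≤ ∑ j, n j := Finset.sum_nonneg fun j _ => (hn j).le
  have hab₂ : 0 < (a - b) ^ 2 := by nlinarith
  have hbounds : ∀ lam > 16 * π * (∑ j, n j) * η / (a - b) ^ 2, ∀ x,
      (-u₀ x + log ((1 + √(1 - 16 * π * (∑ j, n j) * η / (lam * (a - b) ^ 2))) / 2)
        ≤ U lam x ∧ U lam x < -u₀ x) ∧
      (-v₀ x + log ((1 + √(1 - 16 * π * (∑ j, n j) * η / (lam * (a - b) ^ 2))) / 2)
        ≤ W lam x ∧ W lam x < -v₀ x) := by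
    intro lam hlam
    obtain ⟨hU, hW, hmax⟩ := hsol lam hlam
    obtain ⟨hr0, hr1, hrA⟩ :=
      half_one_add_sqrt_spec (c := 16 * π * (∑ j, n j) * η) (by positivity) hab₂ hlam
    exact isCSSolution_bounds_of_maximal hconn hwnn hμ ha hab (lt_of_le_of_lt (by positivity) hlam)
      (α := fun x => 4 * π * ∑ j, m j * dirac μ (p j) x)
      (β := fun x => 4 * π * ∑ j, n j * dirac μ (q j) x)
      (fun x => by rw [hu₀]; ring) (fun x => by rw [hv₀]; ring)
      (fun x => mul_nonneg (by positivity) (sum_mul_dirac_nonneg hμ (fun j => (hm j).le) p x))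
      (fun x => mul_nonneg (by positivity) (sum_mul_dirac_nonneg hμ (fun j => (hn j).le) q x))
      ⟨p ⟨0, hk₁⟩, mul_pos (by positivity) (sum_mul_dirac_pos hμ hm p _)⟩ hr0 hr1
      (fun x => (mul_le_mul_of_nonneg_left (sum_mul_dirac_le hμη hη (fun j => (hm j).le) hN p x)
        (by positivity)).trans_eq (by rw [hrA]; ring))
      (fun x => (mul_le_mul_of_nonneg_left (sum_mul_dirac_le hμη hη (fun j => (hn j).le) le_rfl q x)
        (by positivity)).trans_eq (by rw [hrA]; ring))
      ⟨hU, hW⟩ fun u v h => hmax u v h.1 h.2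
  exact ⟨hbounds,
    fun x => tendsto_of_log_half_one_add_sqrt_le fun lam hlam => (hbounds lam hlam x).1,
    fun x => tendsto_of_log_half_one_add_sqrt_le fun lam hlam => (hbounds lam hlam x).2⟩

/-- Bounds on the maximal solution and convergence (u_λ,v_λ) → (−u₀,−v₀). -/
theorem stmt_16 {V : Type*} [Fintype V] [Nonempty V] [DecidableEq V]
    (w : V → V → ℝ) (μ : V → ℝ)
    (hsymm : ∀ x y, w x y = w y x) (hwnn : ∀ x y, 0 ≤ w x y)
    (hμ : ∀ x, 0 < μ x) (hconn : graphConnected w)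
    (a b : ℝ) (ha : 0 < a) (hab : a < b)
    (k₁ k₂ : ℕ) (hk₁ : 0 < k₁) (hk₂ : 0 < k₂)
    (p : Fin k₁ → V) (q : Fin k₂ → V)
    (m : Fin k₁ → ℝ) (n : Fin k₂ → ℝ)
    (hm : ∀ j, 0 < m j) (hn : ∀ j, 0 < n j)
    (hN : (∑ j, m j) ≤ ∑ j, n j)
    (u₀ v₀ : V → ℝ)
    (hu₀ : ∀ x, graphLap w μ u₀ x =
      -(4 * π * (∑ j, m j)) / (∑ y, μ y) + 4 * π * ∑ j, m j * dirac μ (p j) x)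
    (hv₀ : ∀ x, graphLap w μ v₀ x =
      -(4 * π * (∑ j, n j)) / (∑ y, μ y) + 4 * π * ∑ j, n j * dirac μ (q j) x)
    (η : ℝ) (hη : η = ⨆ x, (μ x)⁻¹)
    (U W : ℝ → V → ℝ)
    (hsol : ∀ lam > 16 * π * (∑ j, n j) * η / (a - b) ^ 2,
      (∀ x, graphLap w μ (U lam) x =
        lam * f₁ a b (U lam x + u₀ x) (W lam x + v₀ x)
          + 4 * π * (∑ j, m j) / (∑ y, μ y)) ∧
      (∀ x, graphLap w μ (W lam) x =
        lam * f₂ a b (U lam x + u₀ x) (W lam x + v₀ x)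
          + 4 * π * (∑ j, n j) / (∑ y, μ y)) ∧
      ∀ u' v' : V → ℝ,
        (∀ x, graphLap w μ u' x =
          lam * f₁ a b (u' x + u₀ x) (v' x + v₀ x)
            + 4 * π * (∑ j, m j) / (∑ y, μ y)) →
        (∀ x, graphLap w μ v' x =
          lam * f₂ a b (u' x + u₀ x) (v' x + v₀ x)
            + 4 * π * (∑ j, n j) / (∑ y, μ y)) →
        (∀ x, u' x ≤ U lam x) ∧ (∀ x, v' x ≤ W lam x)) :
    (∀ lam > 16 * π * (∑ j, n j) * η / (a - b) ^ 2, ∀ x,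
      (-u₀ x + Real.log ((1 + Real.sqrt (1 - 16 * π * (∑ j, n j) * η / (lam * (a - b) ^ 2))) / 2)
        ≤ U lam x ∧ U lam x < -u₀ x) ∧
      (-v₀ x + Real.log ((1 + Real.sqrt (1 - 16 * π * (∑ j, n j) * η / (lam * (a - b) ^ 2))) / 2)
        ≤ W lam x ∧ W lam x < -v₀ x)) ∧
    (∀ x, Tendsto (fun lam => U lam x) atTop (nhds (-u₀ x))) ∧
    (∀ x, Tendsto (fun lam => W lam x) atTop (nhds (-v₀ x))) :=
  stmt_16_general w μ hwnn hμ hconn a b ha hab k₁ k₂ hk₁ p q m n hm hn hN u₀ v₀ hu₀ hv₀ η hη U W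
    hsol
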